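/- Let γ be a generic closed regular curve in ℝ². Then μ(γ) > 0 holds if and only if the set 𝒢(γ) of admissible polygons contains both a positive polygon and a negative polygon. -/

import Mathlib

open Set

noncomputable section

/-- The 2×2 determinant of two plane vectors. -/
def det2 (v w : ℝ × ℝ) : ℝ := v.1 * w.2 - v.2 * w.1

/-- Rotation of a plane vector by +π/2 (the leftward normal direction). -/
def leftNormal (v : ℝ × ℝ) : ℝ × ℝ := (-v.2, v.1)

/-- A closed regular planar curve: a smooth 1-periodic map `ℝ → ℝ²`
with nowhere vanishing derivative. -/
structure PlanarCurve where
  toFun : ℝ → ℝ × ℝ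
  smooth : ContDiff ℝ (⊤ : ℕ∞) toFun
  periodic : Function.Periodic toFun 1
  regular : ∀ t : ℝ, deriv toFun t ≠ 0

/-- `det(γ̇(t), γ̈(t))`; its zeros are the inflection points of `γ`. -/
def curvDet (γ : PlanarCurve) (t : ℝ) : ℝ :=
  det2 (deriv γ.toFun t) (deriv (deriv γ.toFun) t)

/-- The signed curvature `κ_γ(t) = det(γ̇(t), γ̈(t))/|γ̇(t)|³`. -/
def curvature (γ : PlanarCurve) (t : ℝ) : ℝ :=
  curvDet γ t / ‖deriv γ.toFun t‖ ^ 3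

/-- `t` is a parameter mapping to a self-intersection point of `γ`. -/
def IsCrossingParam (γ : PlanarCurve) (t : ℝ) : Prop :=
  ∃ s : ℝ, γ.toFun s = γ.toFun t ∧ ∀ k : ℤ, s ≠ t + k

/-- The set of self-intersection (crossing) points of `γ` in the plane. -/
def crossingSet (γ : PlanarCurve) : Set (ℝ × ℝ) :=
  {p | ∃ t : ℝ, γ.toFun t = p ∧ IsCrossingParam γ t}

/-- `#_γ`, the number of crossings of `γ`. -/
def crossingCount (γ : PlanarCurve) : ℕ := (crossingSet γ).ncard

/-- The inflection parameters of `γ` in one period. -/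
def inflectionSet (γ : PlanarCurve) : Set ℝ :=
  {t ∈ Ico (0 : ℝ) 1 | curvDet γ t = 0}

/-- `i_γ`, the number of inflection points of `γ` in one period. -/
def inflectionCount (γ : PlanarCurve) : ℕ := (inflectionSet γ).ncard

/-- Genericity: the self-intersections form a finite set of transversal double
points, and all the zeros of the curvature are nondegenerate. -/
def IsGeneric (γ : PlanarCurve) : Prop :=
  (crossingSet γ).Finite ∧
  (∀ t s : ℝ, γ.toFun s = γ.toFun t → (∀ k : ℤ, s ≠ t + k) →
      det2 (deriv γ.toFun t) (deriv γ.toFun s) ≠ 0 ∧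
      ∀ u : ℝ, γ.toFun u = γ.toFun t →
        (∃ k : ℤ, u = t + k) ∨ (∃ k : ℤ, u = s + k)) ∧
  (∀ t : ℝ, curvDet γ t = 0 → deriv (curvDet γ) t ≠ 0)

/-- The Jacobian determinant of a map `φ : ℝ² → ℝ²`. -/
def jacDet (φ : ℝ × ℝ → ℝ × ℝ) (p : ℝ × ℝ) : ℝ :=
  det2 (fderiv ℝ φ p (1, 0)) (fderiv ℝ φ p (0, 1))

/-- Two curves are geotopic (have the same topological type) if an
orientation-preserving diffeomorphism of the plane maps the image of one
onto the image of the other. -/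
def Geotopic (γ₁ γ₂ : PlanarCurve) : Prop :=
  ∃ φ ψ : ℝ × ℝ → ℝ × ℝ,
    ContDiff ℝ (⊤ : ℕ∞) φ ∧ ContDiff ℝ (⊤ : ℕ∞) ψ ∧
    (∀ p, ψ (φ p) = p) ∧ (∀ p, φ (ψ p) = p) ∧
    (∀ p, 0 < jacDet φ p) ∧
    φ '' (Set.range γ₁.toFun) = Set.range γ₂.toFun

/-- `I(γ)`: the minimal number of inflection points among generic curves
geotopic to `γ`. -/
def I (γ : PlanarCurve) : ℕ :=
  sInf {k : ℕ | ∃ σ : PlanarCurve, IsGeneric σ ∧ Geotopic γ σ ∧ inflectionCount σ = k}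

/-- `γ` has rotation index `m`: the continuous angle function of the unit
tangent vector increases by `2πm` over one period. -/
def HasRotationIndex (γ : PlanarCurve) (m : ℤ) : Prop :=
  ∃ θ : ℝ → ℝ, Continuous θ ∧
    (∀ t : ℝ, deriv γ.toFun t = ‖deriv γ.toFun t‖ • (Real.cos (θ t), Real.sin (θ t))) ∧
    θ 1 = θ 0 + 2 * Real.pi * m

/-- An (admissible-to-be) `n`-gon of `γ`: a disjoint union of `n` proper
closed arcs of `S¹ = ℝ/ℤ` with endpoints at crossing parameters, whose image
is a (piecewise smooth) simple closed curve, together with its interior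
domain `D` and the orientation data putting `D` on the left. -/
structure CurvePolygon (γ : PlanarCurve) where
  /-- the number of arcs -/
  n : ℕ
  npos : 0 < n
  /-- left endpoints of the arcs -/
  a : Fin n → ℝ
  /-- right endpoints of the arcs -/
  b : Fin n → ℝ
  lt : ∀ i, a i < b i
  /-- the arcs are pairwise disjoint and cyclically ordered within one period -/
  ordered : ∀ i : Fin n,
    (∀ h : (i : ℕ) + 1 < n, b i < a ⟨(i : ℕ) + 1, h⟩) ∧
    ((i : ℕ) + 1 = n → b i < a ⟨0, npos⟩ + 1)
  crossing_a : ∀ i, IsCrossingParam γ (a i)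
  crossing_b : ∀ i, IsCrossingParam γ (b i)
  /-- the image `γ(J)` is a simple closed curve -/
  jordan : Nonempty ((γ.toFun '' (⋃ i, Icc (a i) (b i))) ≃ₜ Circle)
  /-- the interior domain -/
  D : Set (ℝ × ℝ)
  D_open : IsOpen D
  D_bounded : Bornology.IsBounded D
  D_conn : IsConnected D
  D_simplyConnected : SimplyConnectedSpace ↥D
  D_frontier : frontier D = γ.toFun '' (⋃ i, Icc (a i) (b i))
  /-- the sign `ε_J` on each arc -/
  eps : Fin n → ℤ
  eps_pm : ∀ i, eps i = 1 ∨ eps i = -1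
  /-- traversing arc `i` in the direction given by `eps i`, the interior
  domain `D` lies on the left -/
  eps_left : ∀ i, ∀ t ∈ Ioo (a i) (b i), ∃ δ > 0, ∀ s ∈ Ioo (0 : ℝ) δ,
      γ.toFun t + s • leftNormal ((eps i : ℝ) • deriv γ.toFun t) ∈ D
  /-- the combinatorial successor: arc `next i` starts at the vertex where
  arc `i` ends -/
  next : Equiv.Perm (Fin n)
  next_match : ∀ i, γ.toFun (if eps i = 1 then b i else a i)
      = γ.toFun (if eps (next i) = 1 then a (next i) else b (next i))

namespace CurvePolygon

variable {γ : PlanarCurve}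

/-- The incoming unit-scale tangent direction at the end vertex of arc `i`. -/
def incoming (J : CurvePolygon γ) (i : Fin J.n) : ℝ × ℝ :=
  (J.eps i : ℝ) • deriv γ.toFun (if J.eps i = 1 then J.b i else J.a i)

/-- The outgoing tangent direction at the start vertex of arc `i`. -/
def outgoing (J : CurvePolygon γ) (i : Fin J.n) : ℝ × ℝ :=
  (J.eps i : ℝ) • deriv γ.toFun (if J.eps i = 1 then J.a i else J.b i)

/-- The interior angle at the vertex following arc `i` is less than `π`
(all vertices are transversal crossings, so angles are never `0` or `π`). -/
def AngleLtPi (J : CurvePolygon γ) (i : Fin J.n) : Prop :=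
  0 < det2 (J.incoming i) (J.outgoing (J.next i))

/-- Admissibility: at most two of the interior angles are less than `π`. -/
def Admissible (J : CurvePolygon γ) : Prop :=
  {i : Fin J.n | J.AngleLtPi i}.ncard ≤ 2

/-- A positive polygon: every arc is traversed in the direction of `γ`. -/
def Positive (J : CurvePolygon γ) : Prop := ∀ i, J.eps i = 1

/-- A negative polygon: every arc is traversed against the direction of `γ`. -/
def Negative (J : CurvePolygon γ) : Prop := ∀ i, J.eps i = -1

end CurvePolygon

/-- A shell (1-gon) of `γ` with arc `[x, y]` and sign `sgn`. -/
def IsShell (γ : PlanarCurve) (x y : ℝ) (sgn : ℤ) : Prop :=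
  ∃ J : CurvePolygon γ, J.n = 1 ∧ ∀ i : Fin J.n, J.a i = x ∧ J.b i = y ∧ J.eps i = sgn

/-- An admissible function for `γ`: a `{0, ±1}`-valued 1-periodic function on
`S¹_γ` (vanishing at the crossing parameters) with finite support, such that
every admissible polygon `J` contains a support point `t` with `Φ t = ε_J t`. -/
def IsAdmissibleFun (γ : PlanarCurve) (Φ : ℝ → ℤ) : Prop :=
  Function.Periodic Φ 1 ∧
  (∀ t, Φ t = 0 ∨ Φ t = 1 ∨ Φ t = -1) ∧
  (∀ t, IsCrossingParam γ t → Φ t = 0) ∧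
  {t ∈ Ico (0 : ℝ) 1 | Φ t ≠ 0}.Finite ∧
  ∀ J : CurvePolygon γ, J.Admissible →
    ∃ i : Fin J.n, ∃ t ∈ Ioo (J.a i) (J.b i), Φ t = J.eps i

/-- The support of `Φ` within one period. -/
def suppIn (Φ : ℝ → ℤ) : Set ℝ := {t ∈ Ico (0 : ℝ) 1 | Φ t ≠ 0}

/-- The cyclic successor of `x` in a (finite) set `S ⊆ [0,1)`. -/
def nextPt (S : Set ℝ) (x : ℝ) : ℝ := by
  classical exact if (∃ y ∈ S, x < y) then sInf {y ∈ S | x < y} else sInf S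

/-- `μ(Φ)`: the number of cyclic sign changes of the nonzero values of `Φ`. -/
def muFun (Φ : ℝ → ℤ) : ℕ :=
  {t ∈ suppIn Φ | Φ t ≠ Φ (nextPt (suppIn Φ) t)}.ncard

/-- The invariant `μ(γ)`: the minimum of `μ(Φ)` over admissible functions. -/
def mu (γ : PlanarCurve) : ℕ :=
  sInf {k : ℕ | ∃ Φ : ℝ → ℤ, IsAdmissibleFun γ Φ ∧ muFun Φ = k}

/-! ### Double tangents -/

/-- The line through `p` with direction `v`. -/
def lineThrough (p v : ℝ × ℝ) : Set (ℝ × ℝ) := {q | det2 v (q - p) = 0}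

/-- The points of the line through `p` with direction `v` at which the line is
tangent to `γ`. -/
def tangentPts (γ : PlanarCurve) (p v : ℝ × ℝ) : Set (ℝ × ℝ) :=
  {q | det2 v (q - p) = 0 ∧ ∃ t : ℝ, γ.toFun t = q ∧ det2 v (deriv γ.toFun t) = 0}

/-- `L` is a double tangent of `γ`: a line tangent to `γ` at exactly two
points of its image. -/
def IsDoubleTangent (γ : PlanarCurve) (L : Set (ℝ × ℝ)) : Prop :=
  ∃ p v : ℝ × ℝ, v ≠ 0 ∧ L = lineThrough p v ∧ (tangentPts γ p v).ncard = 2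

/-- Near the parameter `t`, the curve lies (weakly) on the `σ`-side of the
line through `p` with direction `v`. -/
def LocallyOnSide (γ : PlanarCurve) (p v : ℝ × ℝ) (t : ℝ) (σ : ℝ) : Prop :=
  ∃ δ > 0, ∀ s : ℝ, |s - t| < δ → 0 ≤ σ * det2 v (γ.toFun s - p)

/-- A same-side double tangent: near both tangency points the curve lies on
the same side of the line. -/
def IsSameSideDT (γ : PlanarCurve) (L : Set (ℝ × ℝ)) : Prop :=
  ∃ p v : ℝ × ℝ, v ≠ 0 ∧ L = lineThrough p v ∧ (tangentPts γ p v).ncard = 2 ∧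
    ∃ σ : ℝ, (σ = 1 ∨ σ = -1) ∧
      ∀ t : ℝ, γ.toFun t ∈ tangentPts γ p v → det2 v (deriv γ.toFun t) = 0 →
        LocallyOnSide γ p v t σ

/-- An opposite-side double tangent: near the two tangency points the curve
lies on opposite sides of the line. -/
def IsOppSideDT (γ : PlanarCurve) (L : Set (ℝ × ℝ)) : Prop :=
  ∃ p v : ℝ × ℝ, v ≠ 0 ∧ L = lineThrough p v ∧ (tangentPts γ p v).ncard = 2 ∧
    ∃ t₁ t₂ : ℝ, γ.toFun t₁ ≠ γ.toFun t₂ ∧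
      γ.toFun t₁ ∈ tangentPts γ p v ∧ γ.toFun t₂ ∈ tangentPts γ p v ∧
      det2 v (deriv γ.toFun t₁) = 0 ∧ det2 v (deriv γ.toFun t₂) = 0 ∧
      LocallyOnSide γ p v t₁ 1 ∧ LocallyOnSide γ p v t₂ (-1)

/-- `d₁(γ)`: the number of same-side double tangents. -/
def d1 (γ : PlanarCurve) : ℕ := {L : Set (ℝ × ℝ) | IsSameSideDT γ L}.ncard

/-- `d₂(γ)`: the number of opposite-side double tangents. -/
def d2 (γ : PlanarCurve) : ℕ := {L : Set (ℝ × ℝ) | IsOppSideDT γ L}.ncard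

/-- `d(γ) = d₁(γ) + d₂(γ)`: the number of double tangents. -/
def dTot (γ : PlanarCurve) : ℕ := d1 γ + d2 γ

/-- Genericity of the tangent lines: finitely many double tangents, no line
tangent at three or more points, and no double tangent touching `γ` at an
inflection point. -/
def HasGenericTangents (γ : PlanarCurve) : Prop :=
  {L : Set (ℝ × ℝ) | IsDoubleTangent γ L}.Finite ∧
  (∀ p v : ℝ × ℝ, v ≠ 0 → 2 ≤ (tangentPts γ p v).ncard → (tangentPts γ p v).ncard = 2) ∧
  (∀ p v : ℝ × ℝ, v ≠ 0 → 2 ≤ (tangentPts γ p v).ncard →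
    ∀ t : ℝ, det2 v (γ.toFun t - p) = 0 → det2 v (deriv γ.toFun t) = 0 →
      curvDet γ t ≠ 0)

/-- `δ(γ)`: the minimal number of double tangents among generic curves
geotopic to `γ`. -/
def delta (γ : PlanarCurve) : ℕ :=
  sInf {k : ℕ | ∃ σ : PlanarCurve, IsGeneric σ ∧ HasGenericTangents σ ∧
    Geotopic γ σ ∧ dTot σ = k}

/-- `I(γ)` where the minimum is taken over curves generic also with respect to
double tangents. -/
def Idt (γ : PlanarCurve) : ℕ :=
  sInf {k : ℕ | ∃ σ : PlanarCurve, IsGeneric σ ∧ HasGenericTangents σ ∧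
    Geotopic γ σ ∧ inflectionCount σ = k}

/-
Split the circle at the crossing parameters into gaps. If every admissible polygon has an arc
traversed with sign `σ`, then putting the value `σ` at one point of each gap gives an admissible
function without sign changes, so `μ(γ) = 0`. Conversely, putting `1` and `-1` at two distinct
points of each gap shows that admissible functions exist, so `μ(γ)` is attained; an admissible
function with `μ(Φ) = 0` is constant on its support, so it cannot meet both a positive and a
negative polygon with the matching sign.
-/

section NextPt

variable {S : Set ℝ} {x y : ℝ}

lemma nextPt_mem_of_lt (hS : S.Finite) (hy : y ∈ S) (hxy : x < y) :
    nextPt S x ∈ S ∧ x < nextPt S x := by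
  have hex : ∃ y ∈ S, x < y := ⟨y, hy, hxy⟩
  rw [nextPt, if_pos hex]
  exact Set.Nonempty.csInf_mem (s := {y ∈ S | x < y}) ⟨y, hy, hxy⟩
    (hS.subset (Set.sep_subset _ _))

lemma nextPt_mem (hS : S.Finite) (hne : S.Nonempty) (x : ℝ) : nextPt S x ∈ S := by
  by_cases hex : ∃ y ∈ S, x < y
  · obtain ⟨y, hy, hxy⟩ := hex
    exact (nextPt_mem_of_lt hS hy hxy).1
  · rw [nextPt, if_neg hex]
    exact hne.csInf_mem hS

/-- Going up from any point of `S` through successors reaches `max S`, so a function that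
agrees with its value at the successor is constant on `S`. -/
lemma eq_of_forall_eq_nextPt {β : Type*} (hS : S.Finite) {f : ℝ → β}
    (h : ∀ t ∈ S, f t = f (nextPt S t)) (hx : x ∈ S) (hy : y ∈ S) : f x = f y := by
  obtain ⟨M, hMS, hM⟩ := Set.exists_max_image S id hS ⟨x, hx⟩
  suffices hconst : ∀ z ∈ S, f z = f M by rw [hconst x hx, hconst y hy]
  by_contra! hB
  obtain ⟨z, ⟨hzS, hzM⟩, hz⟩ :=
    Set.exists_max_image {z ∈ S | f z ≠ f M} id (hS.subset (Set.sep_subset _ _)) hB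
  have hlt : z < M := lt_of_le_of_ne (hM z hzS) fun h => hzM (h ▸ rfl)
  obtain ⟨hwS, hzw⟩ := nextPt_mem_of_lt hS hMS hlt
  have hw : f (nextPt S z) = f M := by
    by_contra hne
    exact (hz _ ⟨hwS, hne⟩).not_gt hzw
  exact hzM ((h z hzS).trans hw)

end NextPt

lemma muFun_eq_zero_iff {Φ : ℝ → ℤ} (hfin : (suppIn Φ).Finite) :
    muFun Φ = 0 ↔ ∀ t ∈ suppIn Φ, ∀ s ∈ suppIn Φ, Φ t = Φ s := by
  rw [muFun, Set.ncard_eq_zero (hfin.subset (Set.sep_subset _ _)),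
    Set.sep_eq_empty_iff_mem_false]
  simp only [not_not]
  refine ⟨fun h t ht s hs => eq_of_forall_eq_nextPt hfin h ht hs,
    fun h t ht => h t ht _ (nextPt_mem hfin ⟨t, ht⟩ t)⟩

section Crossings

variable {γ : PlanarCurve} {c t : ℝ}

/-- The crossing parameters `c₁ < ⋯ < c_{2m}` of `γ`, repeated with period `1`. -/
def crossingParams (γ : PlanarCurve) : Set ℝ := {t | IsCrossingParam γ t}

lemma PlanarCurve.toFun_add_int (γ : PlanarCurve) (t : ℝ) (k : ℤ) :
    γ.toFun (t + k) = γ.toFun t := by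
  simpa using γ.periodic.sub_int_mul_eq (x := t) (-k)

lemma IsCrossingParam.add_int (h : IsCrossingParam γ t) (k : ℤ) :
    IsCrossingParam γ (t + k) := by
  obtain ⟨s, hs, hne⟩ := h
  refine ⟨s, by rw [γ.toFun_add_int]; exact hs, fun j hj => hne (k + j) ?_⟩
  push_cast at hj ⊢
  linarith

lemma IsCrossingParam.add_one (h : IsCrossingParam γ t) : IsCrossingParam γ (t + 1) := by
  simpa using h.add_int 1

lemma IsCrossingParam.sub_one (h : IsCrossingParam γ t) : IsCrossingParam γ (t - 1) := by
  simpa [sub_eq_add_neg] using h.add_int (-1)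

lemma IsGeneric.finite_crossingParams_inter_Ico (hγ : IsGeneric γ) :
    (crossingParams γ ∩ Ico 0 1).Finite := by
  have fract_eq {u v : ℝ} (hu : u ∈ Ico (0 : ℝ) 1) {k : ℤ} (hk : u = v + k) :
      u = Int.fract v := by
    rw [← Int.fract_eq_self.mpr hu]
    exact Int.fract_eq_fract.mpr ⟨k, by linarith⟩
  have hfiber : ∀ p ∈ crossingSet γ, ({u | γ.toFun u = p} ∩ Ico (0 : ℝ) 1).Finite := by
    rintro p ⟨t, rfl, s, hs, hne⟩
    refine ((Set.finite_singleton (Int.fract s)).insert (Int.fract t)).subset ?_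
    rintro u ⟨hu, huI⟩
    rcases (hγ.2.1 t s hs hne).2 u hu with ⟨k, hk⟩ | ⟨k, hk⟩
    · exact Or.inl (fract_eq huI hk)
    · exact Or.inr (fract_eq huI hk)
  refine (hγ.1.biUnion hfiber).subset ?_
  rintro t ⟨ht, htI⟩
  exact Set.mem_biUnion ⟨t, rfl, ht⟩ ⟨rfl, htI⟩

lemma IsGeneric.finite_crossingParams_inter_Icc (hγ : IsGeneric γ) (a b : ℝ) :
    (crossingParams γ ∩ Icc a b).Finite := by
  refine ((Finset.Icc ⌊a⌋ ⌊b⌋).finite_toSet.biUnion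
    fun k _ => hγ.finite_crossingParams_inter_Ico.image (· + (k : ℝ))).subset ?_
  rintro t ⟨ht, hat, htb⟩
  refine Set.mem_biUnion (x := ⌊t⌋) ?_ ⟨Int.fract t, ⟨?_, ?_⟩, Int.fract_add_floor t⟩
  · exact Finset.mem_coe.mpr (Finset.mem_Icc.mpr ⟨Int.floor_le_floor hat, Int.floor_le_floor htb⟩)
  · show IsCrossingParam γ (Int.fract t)
    simpa [Int.fract, sub_eq_add_neg] using IsCrossingParam.add_int ht (-⌊t⌋)
  · exact ⟨Int.fract_nonneg t, Int.fract_lt_one t⟩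

def nextCrossing (γ : PlanarCurve) (c : ℝ) : ℝ := sInf {t ∈ crossingParams γ | c < t}

lemma nextCrossing_le (ht : t ∈ crossingParams γ) (hct : c < t) : nextCrossing γ c ≤ t :=
  csInf_le ⟨c, fun _ hs => hs.2.le⟩ ⟨ht, hct⟩

lemma IsGeneric.nextCrossing_mem (hγ : IsGeneric γ) (hc : c ∈ crossingParams γ) :
    nextCrossing γ c ∈ crossingParams γ ∧ c < nextCrossing γ c := by
  obtain ⟨m, ⟨hmC, hcm, hm1⟩, hmin⟩ := Set.exists_min_image (crossingParams γ ∩ Ioc c (c + 1))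
    id ((hγ.finite_crossingParams_inter_Icc c (c + 1)).subset
      (Set.inter_subset_inter_right _ Set.Ioc_subset_Icc_self))
    ⟨c + 1, IsCrossingParam.add_one hc, by linarith, le_rfl⟩
  have hleast : IsLeast {t ∈ crossingParams γ | c < t} m := by
    refine ⟨⟨hmC, hcm⟩, fun s ⟨hsC, hcs⟩ => ?_⟩
    rcases le_or_gt s (c + 1) with hs | hs
    · exact hmin s ⟨hsC, hcs, hs⟩
    · exact hm1.trans hs.le
  rw [nextCrossing, hleast.csInf_eq]
  exact ⟨hmC, hcm⟩

lemma IsGeneric.nextCrossing_add_one (hγ : IsGeneric γ) (hc : c ∈ crossingParams γ) :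
    nextCrossing γ (c + 1) = nextCrossing γ c + 1 := by
  obtain ⟨hnC, hcn⟩ := hγ.nextCrossing_mem hc
  obtain ⟨hnC', hcn'⟩ := hγ.nextCrossing_mem (IsCrossingParam.add_one hc)
  have h₁ := nextCrossing_le (c := c + 1) (IsCrossingParam.add_one hnC) (by linarith)
  have h₂ := nextCrossing_le (IsCrossingParam.sub_one hnC') (lt_sub_iff_add_lt.mpr hcn')
  linarith

lemma CurvePolygon.nextCrossing_a_le_b (J : CurvePolygon γ) (i : Fin J.n) :
    nextCrossing γ (J.a i) ≤ J.b i :=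
  nextCrossing_le (J.crossing_b i) (J.lt i)

end Crossings

section GapPoints

variable {γ : PlanarCurve} {θ c t : ℝ}

def gapPoint (γ : PlanarCurve) (θ c : ℝ) : ℝ := c + θ * (nextCrossing γ c - c)

def gapPoints (γ : PlanarCurve) (θ : ℝ) : Set ℝ := gapPoint γ θ '' crossingParams γ

lemma IsGeneric.gapPoint_mem_Ioo (hγ : IsGeneric γ) (hc : c ∈ crossingParams γ)
    (hθ : θ ∈ Ioo 0 1) : gapPoint γ θ c ∈ Ioo c (nextCrossing γ c) := by
  have hgap : 0 < nextCrossing γ c - c := sub_pos.mpr (hγ.nextCrossing_mem hc).2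
  constructor
  · have := mul_pos hθ.1 hgap
    rw [gapPoint]; linarith
  · have := mul_lt_mul_of_pos_right hθ.2 hgap
    rw [gapPoint]; linarith

lemma IsGeneric.gapPoint_add_one (hγ : IsGeneric γ) (hc : c ∈ crossingParams γ) :
    gapPoint γ θ (c + 1) = gapPoint γ θ c + 1 := by
  rw [gapPoint, gapPoint, hγ.nextCrossing_add_one hc]
  ring

lemma IsGeneric.add_one_mem_gapPoints_iff (hγ : IsGeneric γ) :
    t + 1 ∈ gapPoints γ θ ↔ t ∈ gapPoints γ θ := by
  constructor
  · rintro ⟨c, hc, hct⟩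
    refine ⟨c - 1, IsCrossingParam.sub_one hc, ?_⟩
    have := hγ.gapPoint_add_one (θ := θ) (IsCrossingParam.sub_one hc)
    rw [sub_add_cancel] at this
    linarith
  · rintro ⟨c, hc, rfl⟩
    exact ⟨c + 1, IsCrossingParam.add_one hc, hγ.gapPoint_add_one hc⟩

lemma IsGeneric.notMem_crossingParams_of_mem_gapPoints (hγ : IsGeneric γ) (hθ : θ ∈ Ioo 0 1)
    (ht : t ∈ gapPoints γ θ) : t ∉ crossingParams γ := by
  obtain ⟨c, hc, rfl⟩ := ht
  obtain ⟨hct, htn⟩ := hγ.gapPoint_mem_Ioo hc hθ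
  exact fun htC => (nextCrossing_le htC hct).not_gt htn

lemma IsGeneric.finite_gapPoints_inter_Ico (hγ : IsGeneric γ) (hθ : θ ∈ Ioo 0 1) :
    (gapPoints γ θ ∩ Ico 0 1).Finite := by
  refine ((hγ.finite_crossingParams_inter_Icc (-1) 1).image (gapPoint γ θ)).subset ?_
  rintro t ⟨⟨c, hc, rfl⟩, h0, h1⟩
  obtain ⟨hct, htn⟩ := hγ.gapPoint_mem_Ioo hc hθ
  have hn := nextCrossing_le (IsCrossingParam.add_one hc) (lt_add_one c)
  exact ⟨c, ⟨hc, by linarith, by linarith⟩, rfl⟩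

/-- Distinct crossing parameters have disjoint gaps, and within one gap the ratio is determined
by the point. -/
lemma IsGeneric.eq_of_gapPoint_eq (hγ : IsGeneric γ) {θ' c' : ℝ} (hθ : θ ∈ Ioo 0 1)
    (hθ' : θ' ∈ Ioo 0 1) (hc : c ∈ crossingParams γ) (hc' : c' ∈ crossingParams γ)
    (h : gapPoint γ θ c = gapPoint γ θ' c') : θ = θ' := by
  obtain ⟨h₁, h₂⟩ := hγ.gapPoint_mem_Ioo hc hθ
  obtain ⟨h₁', h₂'⟩ := hγ.gapPoint_mem_Ioo hc' hθ'
  obtain rfl : c = c' := by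
    rcases lt_trichotomy c c' with hlt | heq | hlt
    · linarith [nextCrossing_le hc' hlt]
    · exact heq
    · linarith [nextCrossing_le hc hlt]
  have hgap : nextCrossing γ c - c ≠ 0 := (sub_pos.mpr (hγ.nextCrossing_mem hc).2).ne'
  rw [gapPoint, gapPoint, add_right_inj] at h
  exact mul_right_cancel₀ hgap h

end GapPoints

section GapMarker

variable {γ : PlanarCurve} {σ τ : ℤ}

open Classical in
def gapMarker (γ : PlanarCurve) (σ τ : ℤ) (t : ℝ) : ℤ :=
  if t ∈ gapPoints γ (1 / 3) then σ else if t ∈ gapPoints γ (2 / 3) then τ else 0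

lemma one_third_mem_Ioo : (1 / 3 : ℝ) ∈ Ioo 0 1 := by norm_num

lemma two_thirds_mem_Ioo : (2 / 3 : ℝ) ∈ Ioo 0 1 := by norm_num

lemma gapMarker_gapPoint_one_third {c : ℝ} (hc : c ∈ crossingParams γ) :
    gapMarker γ σ τ (gapPoint γ (1 / 3) c) = σ :=
  if_pos ⟨c, hc, rfl⟩

lemma IsGeneric.gapMarker_gapPoint_two_thirds (hγ : IsGeneric γ) {c : ℝ}
    (hc : c ∈ crossingParams γ) : gapMarker γ σ τ (gapPoint γ (2 / 3) c) = τ := by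
  have hnot : gapPoint γ (2 / 3) c ∉ gapPoints γ (1 / 3) := by
    rintro ⟨c', hc', h⟩
    have := hγ.eq_of_gapPoint_eq one_third_mem_Ioo two_thirds_mem_Ioo hc' hc h
    norm_num at this
  rw [gapMarker, if_neg hnot, if_pos ⟨c, hc, rfl⟩]

lemma IsGeneric.suppIn_gapMarker_finite (hγ : IsGeneric γ) :
    (suppIn (gapMarker γ σ τ)).Finite := by
  refine ((hγ.finite_gapPoints_inter_Ico one_third_mem_Ioo).union
    (hγ.finite_gapPoints_inter_Ico two_thirds_mem_Ioo)).subset ?_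
  rintro t ⟨htI, ht⟩
  unfold gapMarker at ht
  split_ifs at ht with h₁ h₂
  exacts [Or.inl ⟨h₁, htI⟩, Or.inr ⟨h₂, htI⟩, absurd rfl ht]

lemma IsGeneric.isAdmissibleFun_gapMarker (hγ : IsGeneric γ) (hσ : σ = 1 ∨ σ = -1)
    (hτ : τ = 1 ∨ τ = -1)
    (hpoly : ∀ J : CurvePolygon γ, J.Admissible → ∃ i, J.eps i = σ ∨ J.eps i = τ) :
    IsAdmissibleFun γ (gapMarker γ σ τ) := by
  refine ⟨fun t => ?_, fun t => ?_, fun t ht => ?_, hγ.suppIn_gapMarker_finite, fun J hJ => ?_⟩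
  · have h₁ := hγ.add_one_mem_gapPoints_iff (t := t) (θ := 1 / 3)
    have h₂ := hγ.add_one_mem_gapPoints_iff (t := t) (θ := 2 / 3)
    unfold gapMarker
    split_ifs <;> tauto
  · unfold gapMarker
    split_ifs <;> omega
  · rw [gapMarker, if_neg (hγ.notMem_crossingParams_of_mem_gapPoints one_third_mem_Ioo · ht),
      if_neg (hγ.notMem_crossingParams_of_mem_gapPoints two_thirds_mem_Ioo · ht)]
  · obtain ⟨i, hi⟩ := hpoly J hJ
    have hca : J.a i ∈ crossingParams γ := J.crossing_a i
    have hb := J.nextCrossing_a_le_b i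
    rcases hi with hi | hi
    · obtain ⟨h₁, h₂⟩ := hγ.gapPoint_mem_Ioo hca one_third_mem_Ioo
      exact ⟨i, _, ⟨h₁, h₂.trans_le hb⟩, hi ▸ gapMarker_gapPoint_one_third hca⟩
    · obtain ⟨h₁, h₂⟩ := hγ.gapPoint_mem_Ioo hca two_thirds_mem_Ioo
      exact ⟨i, _, ⟨h₁, h₂.trans_le hb⟩, hi ▸ hγ.gapMarker_gapPoint_two_thirds hca⟩

lemma IsGeneric.muFun_gapMarker_self (hγ : IsGeneric γ) : muFun (gapMarker γ σ σ) = 0 := by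
  refine (muFun_eq_zero_iff hγ.suppIn_gapMarker_finite).mpr fun t ht s hs => ?_
  have hval : ∀ u, gapMarker γ σ σ u ≠ 0 → gapMarker γ σ σ u = σ := by
    intro u hu
    unfold gapMarker at hu ⊢
    split_ifs at hu ⊢ <;> simp_all
  rw [hval t ht.2, hval s hs.2]

end GapMarker

section Mu

variable {γ : PlanarCurve}

lemma CurvePolygon.exists_eps_eq_of_not_positive (J : CurvePolygon γ) (h : ¬ J.Positive) :
    ∃ i, J.eps i = -1 := by
  simp only [CurvePolygon.Positive, not_forall] at h
  exact h.imp fun i hi => (J.eps_pm i).resolve_left hi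

lemma CurvePolygon.exists_eps_eq_of_not_negative (J : CurvePolygon γ) (h : ¬ J.Negative) :
    ∃ i, J.eps i = 1 := by
  simp only [CurvePolygon.Negative, not_forall] at h
  exact h.imp fun i hi => (J.eps_pm i).resolve_right hi

lemma IsGeneric.mu_eq_zero_of_forall_exists_eps_eq (hγ : IsGeneric γ) {σ : ℤ}
    (hσ : σ = 1 ∨ σ = -1) (h : ∀ J : CurvePolygon γ, J.Admissible → ∃ i, J.eps i = σ) :
    mu γ = 0 :=
  Nat.le_zero.mp <| Nat.sInf_le ⟨gapMarker γ σ σ,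
    hγ.isAdmissibleFun_gapMarker hσ hσ fun J hJ => (h J hJ).imp fun _ => Or.inl,
    hγ.muFun_gapMarker_self⟩

lemma IsGeneric.exists_isAdmissibleFun_muFun_eq_mu (hγ : IsGeneric γ) :
    ∃ Φ, IsAdmissibleFun γ Φ ∧ muFun Φ = mu γ := by
  have hadm : IsAdmissibleFun γ (gapMarker γ 1 (-1)) :=
    hγ.isAdmissibleFun_gapMarker (.inl rfl) (.inr rfl) fun J _ => ⟨⟨0, J.npos⟩, J.eps_pm _⟩
  exact Nat.sInf_mem (s := {k | ∃ Φ, IsAdmissibleFun γ Φ ∧ muFun Φ = k}) ⟨_, _, hadm, rfl⟩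

lemma IsAdmissibleFun.exists_mem_suppIn_eq_eps {Φ : ℝ → ℤ} (hΦ : IsAdmissibleFun γ Φ)
    {J : CurvePolygon γ} (hJ : J.Admissible) : ∃ i, ∃ t ∈ suppIn Φ, Φ t = J.eps i := by
  obtain ⟨i, t, -, ht⟩ := hΦ.2.2.2.2 J hJ
  have hfract : Φ (Int.fract t) = Φ t := by
    rw [Int.fract]
    simpa using hΦ.1.sub_int_mul_eq (x := t) ⌊t⌋
  refine ⟨i, Int.fract t, ⟨⟨Int.fract_nonneg t, Int.fract_lt_one t⟩, ?_⟩, hfract.trans ht⟩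
  rw [hfract, ht]
  rcases J.eps_pm i with h | h <;> simp [h]

lemma IsGeneric.mu_pos_of_positive_of_negative (hγ : IsGeneric γ) {Jp Jn : CurvePolygon γ}
    (hJp : Jp.Admissible) (hpos : Jp.Positive) (hJn : Jn.Admissible) (hneg : Jn.Negative) :
    0 < mu γ := by
  obtain ⟨Φ, hΦ, hμ⟩ := hγ.exists_isAdmissibleFun_muFun_eq_mu
  obtain ⟨i, t, ht, hti⟩ := hΦ.exists_mem_suppIn_eq_eps hJp
  obtain ⟨j, s, hs, hsj⟩ := hΦ.exists_mem_suppIn_eq_eps hJn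
  rw [← hμ, Nat.pos_iff_ne_zero, Ne, muFun_eq_zero_iff hΦ.2.2.2.1]
  intro hconst
  have := hconst t ht s hs
  rw [hti, hsj, hpos i, hneg j] at this
  norm_num at this

end Mu

theorem stmt7 (γ : PlanarCurve) (hγ : IsGeneric γ) :
    0 < mu γ ↔
      (∃ J : CurvePolygon γ, J.Admissible ∧ J.Positive) ∧
      (∃ J : CurvePolygon γ, J.Admissible ∧ J.Negative) := by
  refine ⟨fun hμ => ⟨?_, ?_⟩, fun ⟨⟨Jp, hJp, hpos⟩, ⟨Jn, hJn, hneg⟩⟩ =>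
    hγ.mu_pos_of_positive_of_negative hJp hpos hJn hneg⟩
  · by_contra! h
    exact hμ.ne' (hγ.mu_eq_zero_of_forall_exists_eps_eq (.inr rfl)
      fun J hJ => J.exists_eps_eq_of_not_positive (h J hJ))
  · by_contra! h
    exact hμ.ne' (hγ.mu_eq_zero_of_forall_exists_eps_eq (.inl rfl)
      fun J hJ => J.exists_eps_eq_of_not_negative (h J hJ))

end
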